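/- The set C_0^i of asymptotic classes of geodesic rays from the origin in DL_2(q) that ascend forever in tree T_i without turning is not open in the visual boundary ∂DL_2(q): every class in C_0^i is a limit of a sequence of classes [γ_n] with [γ_n] ∈ C_n^{1-i} (rays agreeing with γ on the first n edges but then bottoming out in T_{1-i}). -/

import Mathlib

/-- A vertex of the (q+1)-regular tree with a distinguished end, in the
horocyclic model: a height `k ∈ ℤ` together with a finitely supported
labelling of the levels strictly below `k`. -/
structure TreeVert (q : ℕ) where
  height : ℤ
  labels : ℤ → ℕ
  labels_lt : ∀ n, labels n = 0 ∨ labels n < q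
  supp_below : ∀ n, height ≤ n → labels n = 0
  fin_supp : (Function.support labels).Finite

namespace DL

variable {q d : ℕ}

/-- `v` is a child of `u` (one step further from the distinguished end). -/
abbrev treeAdjUp (u v : TreeVert q) : Prop :=
  v.height = u.height + 1 ∧ ∀ n, n ≠ u.height → v.labels n = u.labels n

/-- The (q+1)-regular tree. -/
def TreeGraph (q : ℕ) : SimpleGraph (TreeVert q) where
  Adj u v := treeAdjUp u v ∨ treeAdjUp v u
  symm := ⟨fun u v h => Or.symm h⟩
  loopless := by
    constructor
    intro u h
    rcases h with ⟨h1, _⟩ | ⟨h1, _⟩ <;> omega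

/-- The base vertex of the tree. -/
def treeOrigin (q : ℕ) : TreeVert q :=
  ⟨0, fun _ => 0, fun _ => Or.inl rfl, fun _ _ => rfl, by simp⟩

/-- Vertices of the Diestel–Leader graph `DL_d(q)`:
`d`-tuples of tree vertices whose heights sum to zero. -/
def DLVert (d q : ℕ) : Type :=
  {x : Fin d → TreeVert q // (∑ i, (x i).height) = 0}

/-- The Diestel–Leader graph `DL_d(q)`: an edge ascends in one tree and
descends in another, all other coordinates being fixed. -/
def DLGraph (d q : ℕ) : SimpleGraph (DLVert d q) where
  Adj v w := ∃ i j : Fin d, i ≠ j ∧ treeAdjUp (v.1 i) (w.1 i) ∧ treeAdjUp (w.1 j) (v.1 j) ∧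
      ∀ k : Fin d, k ≠ i → k ≠ j → v.1 k = w.1 k
  symm := by
    constructor
    rintro v w ⟨i, j, hij, h1, h2, h3⟩
    exact ⟨j, i, hij.symm, h2, h1, fun k hk1 hk2 => (h3 k hk2 hk1).symm⟩
  loopless := by
    constructor
    rintro v ⟨i, j, hij, ⟨h1, _⟩, _⟩
    omega

/-- The base point of `DL_d(q)`. -/
def origin (d q : ℕ) : DLVert d q :=
  ⟨fun _ => treeOrigin q, by simp [treeOrigin]⟩

/-- A geodesic ray in `DL_d(q)` : an isometric embedding of `ℕ`. -/
def IsGeodesicRay (γ : ℕ → DLVert d q) : Prop :=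
  ∀ m n : ℕ, m ≤ n → (DLGraph d q).dist (γ m) (γ n) = n - m

/-- Two rays are asymptotic when they stay at uniformly bounded distance. -/
def Asymptotic (γ γ' : ℕ → DLVert d q) : Prop :=
  ∃ C : ℕ, ∀ n : ℕ, (DLGraph d q).dist (γ n) (γ' n) ≤ C

instance : TopologicalSpace (DLVert d q) := ⊥

/-- Geodesic rays emanating from the origin, with the topology of uniform
convergence on compact sets (= pointwise convergence, the vertex set being
discrete). -/
def RaySpace (d q : ℕ) : Type :=
  {γ : ℕ → DLVert d q // IsGeodesicRay γ ∧ γ 0 = origin d q}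

instance : TopologicalSpace (RaySpace d q) := by
  unfold RaySpace; infer_instance

lemma reachable_origin (γ : RaySpace d q) (n : ℕ) :
    (DLGraph d q).Reachable (origin d q) (γ.1 n) := by
  cases n with
  | zero => rw [γ.2.2]
  | succ n =>
    have h := γ.2.1 0 (n + 1) (Nat.zero_le _)
    have hne : (DLGraph d q).dist (γ.1 0) (γ.1 (n + 1)) ≠ 0 := by
      rw [h]; omega
    have := SimpleGraph.Reachable.of_dist_ne_zero hne
    rwa [γ.2.2] at this

/-- Asymptoticity as an equivalence relation on geodesic rays from the origin. -/
def asympSetoid (d q : ℕ) : Setoid (RaySpace d q) where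
  r γ γ' := Asymptotic γ.1 γ'.1
  iseqv := by
    constructor
    · intro γ
      exact ⟨0, fun n => by simp [SimpleGraph.dist_self]⟩
    · rintro γ γ' ⟨C, hC⟩
      exact ⟨C, fun n => by rw [SimpleGraph.dist_comm]; exact hC n⟩
    · rintro a b c ⟨C1, h1⟩ ⟨C2, h2⟩
      refine ⟨C1 + C2, fun n => ?_⟩
      have hab : (DLGraph d q).Reachable (a.1 n) (b.1 n) :=
        (reachable_origin a n).symm.trans (reachable_origin b n)
      have hbc : (DLGraph d q).Reachable (b.1 n) (c.1 n) :=
        (reachable_origin b n).symm.trans (reachable_origin c n)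
      obtain ⟨p, hp⟩ := hab.exists_walk_length_eq_dist
      obtain ⟨p', hp'⟩ := hbc.exists_walk_length_eq_dist
      calc (DLGraph d q).dist (a.1 n) (c.1 n) ≤ (p.append p').length :=
            SimpleGraph.dist_le _
        _ = (DLGraph d q).dist (a.1 n) (b.1 n) + (DLGraph d q).dist (b.1 n) (c.1 n) := by
            rw [SimpleGraph.Walk.length_append, hp, hp']
        _ ≤ C1 + C2 := Nat.add_le_add (h1 n) (h2 n)

/-- The visual boundary of `DL_d(q)`: asymptotic classes of geodesic rays
from the origin, with the quotient topology. -/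
def Boundary (d q : ℕ) : Type := Quotient (asympSetoid d q)

instance : TopologicalSpace (Boundary d q) := by
  unfold Boundary; infer_instance

/-- A ray in `DL_2(q)` descends for exactly `n` steps in tree `i`
(bottoming out at height `-n`), then ascends forever in tree `i`.
For `n = 0` this says the ray ascends forever in tree `i` with no turn. -/
def DescendsExactly (i : Fin 2) (n : ℕ) (γ : ℕ → DLVert 2 q) : Prop :=
  (∀ t : ℕ, t ≤ n → ((γ t).1 i).height = -(t : ℤ)) ∧
  (∀ t : ℕ, n ≤ t → ((γ t).1 i).height = (t : ℤ) - 2 * n)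

/-- The subset `C_n^i` of the boundary: classes of rays bottoming out in
tree `i` after descending exactly `n` edges. -/
def Cset (q : ℕ) (i : Fin 2) (n : ℕ) : Set (Boundary 2 q) :=
  {x | ∃ γ : RaySpace 2 q, Quotient.mk (asympSetoid 2 q) γ = x ∧ DescendsExactly i n γ.1}

/-- Projection of a path in `DL_d(q)` to the `i`-th tree. -/
def proj (i : Fin d) (γ : ℕ → DLVert d q) : ℕ → TreeVert q := fun n => (γ n).1 i

/-- Two (lazy) paths in the tree converge to the same end: both eventually
leave every ball, and they come within a uniformly bounded distance of each
other at arbitrarily late times. -/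
def SameEnd (a b : ℕ → TreeVert q) : Prop :=
  (∀ R : ℕ, ∃ N : ℕ, ∀ n, N ≤ n → R ≤ (TreeGraph q).dist (a 0) (a n)) ∧
  (∀ R : ℕ, ∃ N : ℕ, ∀ n, N ≤ n → R ≤ (TreeGraph q).dist (b 0) (b n)) ∧
  (∃ C : ℕ, ∀ N : ℕ, ∃ m n, N ≤ m ∧ N ≤ n ∧ (TreeGraph q).dist (a m) (b n) ≤ C)

/-- The step from `p m` to `p (m+1)` descends in tree `i`. -/
def StepDown (i : Fin d) (p : ℕ → DLVert d q) (m : ℕ) : Prop :=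
  treeAdjUp ((p (m + 1)).1 i) ((p m).1 i)

/-- The step from `p m` to `p (m+1)` ascends in tree `i`. -/
def StepUp (i : Fin d) (p : ℕ → DLVert d q) (m : ℕ) : Prop :=
  treeAdjUp ((p m).1 i) ((p (m + 1)).1 i)

/-- A turn in tree `i`: a subpath beginning with a descent in `T_i` at step `t`,
ending with an ascent in `T_i` at step `s`, with no intervening step
involving `T_i`. -/
def IsTurn (i : Fin d) (p : ℕ → DLVert d q) (t s : ℕ) : Prop :=
  t < s ∧ StepDown i p t ∧ StepUp i p s ∧
    ∀ m, t < m → m < s → (p (m + 1)).1 i = (p m).1 i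

/-! Let `γ` ascend forever in `T_i`; its projection to `T_{1-i}` is then the descent along the
all-zero branch. The ray `γ_n` follows `γ` for `n` steps and then turns: it descends in `T_i` along
the ancestors of `γ n` and ascends in `T_{1-i}` through children labelled `1 ≠ 0`, so it leaves
the branch of `γ` at level `-n`. Distances in `DL_2(q)` are bounded below
by height differences and by the depth of the level where two tree coordinates disagree; this
shows that `γ_n` is geodesic, and `γ_n → γ` since they agree up to time `n`. A ray of `C_0^i`
and one of `C_n^{1-i}` have heights `t` and `2n - t` in `T_i`, so they are never asymptotic;
hence any point of `C_0^i` (e.g. the class of the all-zero ray) is a limit of points outside it.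
-/

section Graph

variable {V : Type*} {G : SimpleGraph V}

theorem _root_.SimpleGraph.Walk.abs_sub_le_length {f : V → ℤ}
    (hf : ∀ u v, G.Adj u v → |f u - f v| ≤ 1) {u v : V} (p : G.Walk u v) :
    |f u - f v| ≤ p.length := by
  induction p with
  | nil => simp
  | cons hadj p ih =>
    have := hf _ _ hadj
    rw [SimpleGraph.Walk.length_cons, abs_le] at *
    push_cast
    omega

theorem _root_.SimpleGraph.Reachable.abs_sub_le_dist {f : V → ℤ}
    (hf : ∀ u v, G.Adj u v → |f u - f v| ≤ 1) {u v : V} (h : G.Reachable u v) :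
    |f u - f v| ≤ G.dist u v := by
  obtain ⟨p, hp⟩ := h.exists_walk_length_eq_dist
  exact hp ▸ p.abs_sub_le_length hf

theorem _root_.SimpleGraph.exists_walk_length_eq_of_adj_succ {p : ℕ → V}
    (h : ∀ t, G.Adj (p t) (p (t + 1))) {m t : ℕ} (hmt : m ≤ t) :
    ∃ w : G.Walk (p m) (p t), w.length = t - m := by
  induction t, hmt using Nat.le_induction with
  | base => exact ⟨.nil, by simp⟩
  | succ t hmt ih =>
    obtain ⟨w, hw⟩ := ih
    exact ⟨w.concat (h t), by rw [SimpleGraph.Walk.length_concat]; omega⟩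

end Graph

attribute [ext] TreeVert

section Tree

theorem treeAdjUp_unique_left {u u' v : TreeVert q} (h : treeAdjUp u v) (h' : treeAdjUp u' v) :
    u = u' := by
  have hheight : u.height = u'.height := by omega
  ext l
  · exact hheight
  · by_cases hl : l = u.height
    · rw [u.supp_below l hl.ge, u'.supp_below l (hheight ▸ hl).ge]
    · rw [← h.2 l hl, h'.2 l (hheight ▸ hl)]

def _root_.TreeVert.truncate (v : TreeVert q) (h : ℤ) : TreeVert q where
  height := h
  labels l := if l < h then v.labels l else 0
  labels_lt l := by
    split_ifs
    exacts [v.labels_lt l, Or.inl rfl]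
  supp_below l hl := if_neg hl.not_gt
  fin_supp := v.fin_supp.subset <| Function.support_subset_iff'.2 fun l hl => by
    simp [Function.notMem_support.1 hl]

@[simp]
theorem _root_.TreeVert.truncate_height (v : TreeVert q) (h : ℤ) : (v.truncate h).height = h :=
  rfl

theorem _root_.TreeVert.truncate_height_self (v : TreeVert q) : v.truncate v.height = v := by
  ext l
  · rfl
  · by_cases hl : l < v.height
    · exact if_pos hl
    · exact (if_neg hl).trans (v.supp_below l (not_lt.1 hl)).symm

theorem _root_.TreeVert.treeAdjUp_truncate (v : TreeVert q) (h : ℤ) :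
    treeAdjUp (v.truncate h) (v.truncate (h + 1)) := by
  refine ⟨rfl, fun l (hl : l ≠ h) => ?_⟩
  show (if l < h + 1 then _ else _) = if l < h then _ else _
  split_ifs <;> first | rfl | omega

def _root_.TreeVert.stripe (hq : 1 < q) (a h : ℤ) : TreeVert q where
  height := h
  labels l := if a ≤ l ∧ l < h then 1 else 0
  labels_lt l := by
    split_ifs
    exacts [Or.inr hq, Or.inl rfl]
  supp_below l hl := if_neg fun hl' => by omega
  fin_supp := (Set.finite_Ico a h).subset <| Function.support_subset_iff'.2 fun l hl => by
    rw [Set.mem_Ico] at hl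
    exact if_neg hl

theorem _root_.TreeVert.treeAdjUp_stripe (hq : 1 < q) (a h : ℤ) :
    treeAdjUp (TreeVert.stripe hq a h) (TreeVert.stripe hq a (h + 1)) := by
  refine ⟨rfl, fun l (hl : l ≠ h) => ?_⟩
  show (if a ≤ l ∧ l < h + 1 then 1 else 0) = if a ≤ l ∧ l < h then 1 else 0
  split_ifs <;> first | rfl | omega

theorem _root_.TreeVert.stripe_of_le (hq : 1 < q) {a h : ℤ} (hha : h ≤ a) :
    TreeVert.stripe hq a h = (treeOrigin q).truncate h := by
  ext l
  · rfl
  · show (if a ≤ l ∧ l < h then 1 else 0) = if l < h then 0 else 0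
    rw [if_neg (by omega), ite_self]

end Tree

section DLGraph

theorem abs_height_sub_le_one_of_adj {v w : DLVert d q} (h : (DLGraph d q).Adj v w)
    (k : Fin d) : |(v.1 k).height - (w.1 k).height| ≤ 1 := by
  obtain ⟨i, j, -, ⟨hi, -⟩, ⟨hj, -⟩, hk⟩ := h
  rw [abs_le]
  by_cases hki : k = i
  · subst hki; omega
  by_cases hkj : k = j
  · subst hkj; omega
  · rw [hk k hki hkj]; omega

theorem abs_height_sub_le_dist {v w : DLVert d q} (h : (DLGraph d q).Reachable v w)
    (k : Fin d) : |(v.1 k).height - (w.1 k).height| ≤ (DLGraph d q).dist v w :=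
  h.abs_sub_le_dist (f := fun x => (x.1 k).height) fun _ _ hadj =>
    abs_height_sub_le_one_of_adj hadj k

theorem labels_eq_of_adj {v w : DLVert d q} (h : (DLGraph d q).Adj v w) (k : Fin d) {l : ℤ}
    (hv : l < (v.1 k).height) (hw : l < (w.1 k).height) :
    (v.1 k).labels l = (w.1 k).labels l := by
  obtain ⟨i, j, -, ⟨-, hi⟩, ⟨-, hj⟩, hk⟩ := h
  by_cases hki : k = i
  · subst hki; exact (hi l hv.ne).symm
  by_cases hkj : k = j
  · subst hkj; exact hj l hw.ne
  · rw [hk k hki hkj]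

theorem labels_eq_of_walk {v w : DLVert d q} (p : (DLGraph d q).Walk v w) (k : Fin d) {l : ℤ}
    (hp : ∀ x ∈ p.support, l < (x.1 k).height) : (v.1 k).labels l = (w.1 k).labels l := by
  induction p with
  | nil => rfl
  | cons hadj p ih =>
    rw [labels_eq_of_adj hadj k (hp _ (by simp)) (hp _ (by simp))]
    exact ih fun x hx => hp x (List.mem_cons_of_mem _ hx)

/-- A walk between vertices whose `k`-th coordinates disagree at level `l` must pass through
level `l` of the `k`-th tree. -/
theorem height_sub_add_height_sub_le_dist {v w : DLVert d q} (h : (DLGraph d q).Reachable v w)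
    (k : Fin d) {l : ℤ} (hne : (v.1 k).labels l ≠ (w.1 k).labels l) :
    ((v.1 k).height - l) + ((w.1 k).height - l) ≤ (DLGraph d q).dist v w := by
  classical
  obtain ⟨p, hp⟩ := h.exists_walk_length_eq_dist
  obtain ⟨x, hx, hxl⟩ : ∃ x ∈ p.support, (x.1 k).height ≤ l := by
    by_contra! hall
    exact hne (labels_eq_of_walk p k hall)
  have hlip : ∀ a b, (DLGraph d q).Adj a b → |(a.1 k).height - (b.1 k).height| ≤ 1 :=
    fun _ _ hadj => abs_height_sub_le_one_of_adj hadj k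
  have h₁ := (p.takeUntil x hx).abs_sub_le_length hlip
  have h₂ := (p.dropUntil x hx).abs_sub_le_length hlip
  have hlen := congrArg SimpleGraph.Walk.length (p.take_spec hx)
  rw [SimpleGraph.Walk.length_append] at hlen
  rw [abs_le] at h₁ h₂
  rw [← hp, ← hlen]
  push_cast
  omega

theorem RaySpace.adj_succ (γ : RaySpace d q) (t : ℕ) : (DLGraph d q).Adj (γ.1 t) (γ.1 (t + 1)) :=
  SimpleGraph.dist_eq_one_iff_adj.1 <| by simpa using γ.2.1 t (t + 1) t.le_succ

theorem isGeodesicRay_of_adj_succ {p : ℕ → DLVert d q}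
    (hadj : ∀ t, (DLGraph d q).Adj (p t) (p (t + 1)))
    (hlower : ∀ m t, m ≤ t → (DLGraph d q).Reachable (p m) (p t) →
      (t : ℤ) - m ≤ (DLGraph d q).dist (p m) (p t)) :
    IsGeodesicRay p := by
  intro m t hmt
  obtain ⟨w, hw⟩ := SimpleGraph.exists_walk_length_eq_of_adj_succ hadj hmt
  have hupper := hw ▸ SimpleGraph.dist_le w
  have := hlower m t hmt ⟨w⟩
  omega

instance : DiscreteTopology (DLVert d q) := ⟨rfl⟩

theorem RaySpace.tendsto_of_eqOn {γs : ℕ → RaySpace d q} {γ : RaySpace d q}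
    (h : ∀ n t, t ≤ n → (γs n).1 t = γ.1 t) : Filter.Tendsto γs Filter.atTop (nhds γ) := by
  refine tendsto_subtype_rng.2 <| tendsto_pi_nhds.2 fun t => ?_
  rw [nhds_discrete, Filter.tendsto_pure]
  filter_upwards [Filter.eventually_ge_atTop t] with n hn using h n t hn

end DLGraph

section DLTwo

theorem _root_.Fin.eq_or_eq_one_sub (i k : Fin 2) : k = i ∨ k = 1 - i := by
  fin_cases i <;> fin_cases k <;> simp

theorem _root_.Fin.one_sub_ne_self (i : Fin 2) : 1 - i ≠ i := by
  fin_cases i <;> decide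

theorem DLVert.height_add_height_one_sub (v : DLVert 2 q) (k : Fin 2) :
    (v.1 k).height + (v.1 (1 - k)).height = 0 := by
  have h := v.2
  rw [Fin.sum_univ_two] at h
  fin_cases k <;> simp at h ⊢ <;> omega

theorem DLVert.ext_two (i : Fin 2) {v w : DLVert 2 q} (hi : v.1 i = w.1 i)
    (hi' : v.1 (1 - i) = w.1 (1 - i)) : v = w := by
  refine Subtype.ext <| funext fun k => ?_
  rcases Fin.eq_or_eq_one_sub i k with rfl | rfl
  exacts [hi, hi']

def DLVert.mk₂ (i : Fin 2) (a b : TreeVert q) (h : a.height + b.height = 0) : DLVert 2 q :=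
  ⟨fun k => if k = i then a else b, by
    rw [Fin.sum_univ_two]
    fin_cases i <;> simp <;> omega⟩

theorem DLVert.mk₂_apply_self (i : Fin 2) (a b : TreeVert q) (h : a.height + b.height = 0) :
    (DLVert.mk₂ i a b h).1 i = a :=
  if_pos rfl

theorem DLVert.mk₂_apply_one_sub (i : Fin 2) (a b : TreeVert q) (h : a.height + b.height = 0) :
    (DLVert.mk₂ i a b h).1 (1 - i) = b :=
  if_neg (Fin.one_sub_ne_self i)

theorem adj_of_treeAdjUp_of_treeAdjUp {v w : DLVert 2 q} (i : Fin 2)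
    (hup : treeAdjUp (v.1 i) (w.1 i)) (hdown : treeAdjUp (w.1 (1 - i)) (v.1 (1 - i))) :
    (DLGraph 2 q).Adj v w :=
  ⟨i, 1 - i, (Fin.one_sub_ne_self i).symm, hup, hdown, fun k hki hki' => by
    rcases Fin.eq_or_eq_one_sub i k with rfl | rfl <;> contradiction⟩

variable {i : Fin 2}

theorem height_of_descendsExactly_zero {γ : ℕ → DLVert 2 q} (hγ : DescendsExactly i 0 γ)
    (t : ℕ) : ((γ t).1 i).height = t := by
  simpa using hγ.2 t t.zero_le

theorem height_one_sub_of_descendsExactly_zero {γ : ℕ → DLVert 2 q}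
    (hγ : DescendsExactly i 0 γ) (t : ℕ) : ((γ t).1 (1 - i)).height = -t := by
  have := (γ t).height_add_height_one_sub i
  have := height_of_descendsExactly_zero hγ t
  omega

/-- A ray ascending forever in `T_i` descends in `T_{1-i}`, and descents are unique. -/
theorem coord_one_sub_of_descendsExactly_zero {γ : RaySpace 2 q} (hγ : DescendsExactly i 0 γ.1)
    (t : ℕ) : (γ.1 t).1 (1 - i) = (treeOrigin q).truncate (-t) := by
  induction t with
  | zero => rw [γ.2.2]; exact (treeOrigin q).truncate_height_self.symm
  | succ t ih =>
    obtain ⟨a, b, -, ⟨ha, -⟩, hdown, -⟩ := γ.adj_succ t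
    have hb : b = 1 - i := by
      rcases Fin.eq_or_eq_one_sub i b with rfl | h
      · have := height_of_descendsExactly_zero hγ t
        have := height_of_descendsExactly_zero hγ (t + 1)
        push_cast at *
        omega
      · exact h
    subst hb
    rw [ih] at hdown
    refine treeAdjUp_unique_left hdown ?_
    convert (treeOrigin q).treeAdjUp_truncate (-(t + 1 : ℕ)) using 2
    push_cast; ring

end DLTwo

section Turn

variable {i : Fin 2} (hq : 1 < q) (γ : RaySpace 2 q)

def turnVert (i : Fin 2) (n t : ℕ) : DLVert 2 q :=
  .mk₂ i (((γ.1 n).1 i).truncate (2 * n - t)) (TreeVert.stripe hq (-n) (t - 2 * n)) (by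
    show (2 * n - t : ℤ) + (t - 2 * n) = 0
    ring)

def turnPath (i : Fin 2) (n : ℕ) : ℕ → DLVert 2 q :=
  fun t => if t ≤ n then γ.1 t else turnVert hq γ i n t

variable {γ}

theorem turnPath_of_le {n t : ℕ} (h : t ≤ n) : turnPath hq γ i n t = γ.1 t :=
  if_pos h

theorem turnVert_self (hγ : DescendsExactly i 0 γ.1) (n : ℕ) : turnVert hq γ i n n = γ.1 n := by
  refine DLVert.ext_two i ?_ ?_
  · rw [turnVert, DLVert.mk₂_apply_self]
    convert ((γ.1 n).1 i).truncate_height_self using 2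
    rw [height_of_descendsExactly_zero hγ]
    ring
  · rw [turnVert, DLVert.mk₂_apply_one_sub, TreeVert.stripe_of_le hq (by omega),
      coord_one_sub_of_descendsExactly_zero hγ]
    congr 1
    ring

theorem turnPath_of_ge (hγ : DescendsExactly i 0 γ.1) {n t : ℕ} (h : n ≤ t) :
    turnPath hq γ i n t = turnVert hq γ i n t := by
  rcases h.eq_or_lt with rfl | h
  · rw [turnPath_of_le hq le_rfl, turnVert_self hq hγ]
  · exact if_neg h.not_ge

theorem turnPath_adj (hγ : DescendsExactly i 0 γ.1) (n t : ℕ) :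
    (DLGraph 2 q).Adj (turnPath hq γ i n t) (turnPath hq γ i n (t + 1)) := by
  rcases Nat.lt_or_ge t n with h | h
  · rw [turnPath_of_le hq h.le, turnPath_of_le hq h]
    exact γ.adj_succ t
  rw [turnPath_of_ge hq hγ h, turnPath_of_ge hq hγ (h.trans t.le_succ)]
  refine adj_of_treeAdjUp_of_treeAdjUp (1 - i) ?_ ?_
  · rw [turnVert, turnVert, DLVert.mk₂_apply_one_sub, DLVert.mk₂_apply_one_sub]
    convert TreeVert.treeAdjUp_stripe hq (-n) (t - 2 * n) using 2
    push_cast; ring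
  · rw [sub_sub_cancel, turnVert, turnVert, DLVert.mk₂_apply_self, DLVert.mk₂_apply_self]
    convert ((γ.1 n).1 i).treeAdjUp_truncate (2 * n - (t + 1 : ℕ)) using 2
    push_cast; ring

theorem turnPath_descendsExactly (hγ : DescendsExactly i 0 γ.1) (n : ℕ) :
    DescendsExactly (1 - i) n (turnPath hq γ i n) := by
  constructor
  · intro t ht
    rw [turnPath_of_le hq ht, height_one_sub_of_descendsExactly_zero hγ]
  · intro t ht
    rw [turnPath_of_ge hq hγ ht, turnVert, DLVert.mk₂_apply_one_sub]
    rfl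

theorem turnPath_isGeodesicRay (hγ : DescendsExactly i 0 γ.1) (n : ℕ) :
    IsGeodesicRay (turnPath hq γ i n) := by
  refine isGeodesicRay_of_adj_succ (turnPath_adj hq hγ n) fun m t hmt hreach => ?_
  have hheight := (turnPath_descendsExactly hq hγ n).2
  rcases le_or_gt t n with htn | hnt
  · rw [turnPath_of_le hq (hmt.trans htn), turnPath_of_le hq htn, γ.2.1 m t hmt]
    omega
  rcases le_or_gt n m with hnm | hmn
  · have := abs_height_sub_le_dist hreach (1 - i)
    rw [hheight m hnm, hheight t hnt.le, abs_le] at this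
    omega
  · -- `turnPath` leaves the descent path of `γ` in `T_{1-i}` at level `-n`
    have hne : ((turnPath hq γ i n m).1 (1 - i)).labels (-n) ≠
        ((turnPath hq γ i n t).1 (1 - i)).labels (-n) := by
      rw [turnPath_of_le hq hmn.le, coord_one_sub_of_descendsExactly_zero hγ,
        turnPath_of_ge hq hγ hnt.le, turnVert, DLVert.mk₂_apply_one_sub]
      show (if (-n : ℤ) < -m then 0 else 0) ≠ if -(n : ℤ) ≤ -n ∧ (-n : ℤ) < t - 2 * n then 1 else 0
      rw [ite_self, if_pos (by omega)]
      omega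
    have := height_sub_add_height_sub_le_dist hreach (1 - i) hne
    rw [(turnPath_descendsExactly hq hγ n).1 m hmn.le, hheight t hnt.le] at this
    omega

def turnRay (hγ : DescendsExactly i 0 γ.1) (n : ℕ) : RaySpace 2 q :=
  ⟨turnPath hq γ i n, turnPath_isGeodesicRay hq hγ n, (turnPath_of_le hq n.zero_le).trans γ.2.2⟩

theorem tendsto_turnRay (hγ : DescendsExactly i 0 γ.1) :
    Filter.Tendsto (turnRay hq hγ) Filter.atTop (nhds γ) :=
  RaySpace.tendsto_of_eqOn fun _ _ => turnPath_of_le hq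

end Turn

section Spine

def spinePath (q : ℕ) (i : Fin 2) (t : ℕ) : DLVert 2 q :=
  .mk₂ i ((treeOrigin q).truncate t) ((treeOrigin q).truncate (-t)) (by
    show (t : ℤ) + -t = 0
    ring)

theorem spinePath_isGeodesicRay (i : Fin 2) : IsGeodesicRay (spinePath q i) := by
  refine isGeodesicRay_of_adj_succ (fun t => adj_of_treeAdjUp_of_treeAdjUp i ?_ ?_)
    fun m t _ hreach => ?_
  · rw [spinePath, spinePath, DLVert.mk₂_apply_self, DLVert.mk₂_apply_self, Nat.cast_succ]
    exact (treeOrigin q).treeAdjUp_truncate t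
  · rw [spinePath, spinePath, DLVert.mk₂_apply_one_sub, DLVert.mk₂_apply_one_sub]
    convert (treeOrigin q).treeAdjUp_truncate (-(t + 1 : ℕ)) using 2
    push_cast; ring
  · have := abs_height_sub_le_dist hreach i
    simp only [spinePath, DLVert.mk₂_apply_self, TreeVert.truncate_height, abs_le] at this ⊢
    omega

def spine (q : ℕ) (i : Fin 2) : RaySpace 2 q :=
  ⟨spinePath q i, spinePath_isGeodesicRay i,
    DLVert.ext_two i ((DLVert.mk₂_apply_self ..).trans (treeOrigin q).truncate_height_self)
      ((DLVert.mk₂_apply_one_sub ..).trans (treeOrigin q).truncate_height_self)⟩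

theorem spine_descendsExactly (i : Fin 2) : DescendsExactly i 0 (spine q i).1 := by
  constructor <;> intro t ht <;>
    simp only [spine, spinePath, DLVert.mk₂_apply_self, TreeVert.truncate_height] <;> omega

end Spine

theorem disjoint_Cset_zero_Cset_one_sub (i : Fin 2) (n : ℕ) :
    Disjoint (Cset q i 0) (Cset q (1 - i) n) := by
  rw [Set.disjoint_left]
  rintro _ ⟨γ, rfl, hγ⟩ ⟨γ', hγγ', hγ'⟩
  obtain ⟨C, hC⟩ : Asymptotic γ.1 γ'.1 := Quotient.exact hγγ'.symm
  set t := n + C + 1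
  have hreach := (reachable_origin γ t).symm.trans (reachable_origin γ' t)
  have hdist := abs_height_sub_le_dist hreach i
  have hsum := (γ'.1 t).height_add_height_one_sub (1 - i)
  rw [sub_sub_cancel, hγ'.2 t (by omega)] at hsum
  rw [height_of_descendsExactly_zero hγ, abs_le] at hdist
  have := hC t
  omega

/-- `C_0^i` is not open: each of its points is a limit of a
sequence of classes with `u n ∈ C_n^{1-i}`. -/
theorem Cset_zero_not_open {q : ℕ} (hq : 2 ≤ q) (i : Fin 2) :
    (∀ x ∈ Cset q i 0, ∃ u : ℕ → Boundary 2 q,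
      (∀ n : ℕ, 0 < n → u n ∈ Cset q (1 - i) n) ∧
      Filter.Tendsto u Filter.atTop (nhds x)) ∧
    ¬ IsOpen (Cset q i 0) := by
  have approx : ∀ x ∈ Cset q i 0, ∃ u : ℕ → Boundary 2 q,
      (∀ n : ℕ, 0 < n → u n ∈ Cset q (1 - i) n) ∧
      Filter.Tendsto u Filter.atTop (nhds x) := by
    rintro _ ⟨γ, rfl, hγ⟩
    exact ⟨fun n => Quotient.mk _ (turnRay hq hγ n),
      fun n _ => ⟨_, rfl, turnPath_descendsExactly hq hγ n⟩,
      (continuous_quot_mk.tendsto γ).comp (tendsto_turnRay hq hγ)⟩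
  refine ⟨approx, fun hopen => ?_⟩
  have hspine : Quotient.mk _ (spine q i) ∈ Cset q i 0 := ⟨_, rfl, spine_descendsExactly i⟩
  obtain ⟨u, hu, hlim⟩ := approx _ hspine
  obtain ⟨n, hn, hpos⟩ := ((hlim.eventually (hopen.mem_nhds hspine)).and
    (Filter.eventually_gt_atTop 0)).exists
  exact Set.disjoint_left.1 (disjoint_Cset_zero_Cset_one_sub i n) hn (hu n hpos)

end DL
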